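/- Let R > 0 and (c_n) a sequence with |c_n| < R, and suppose R_0 satisfies R_0^2 - R ≥ 2R_0 and R_0 ≥ 2R. Then for every z with |z| > R_0 the limit g_ω(z) = lim_{n→∞} 2^{-n} log|f^n_ω(z)| exists. -/

import Mathlib

open Filter MeasureTheory Topology

/-- Non-autonomous iteration of quadratic maps: `fiter c (n+1) z = (fiter c n z)^2 + c n`. -/
noncomputable def fiter (c : ℕ → ℂ) : ℕ → ℂ → ℂ
  | 0, z => z
  | n + 1, z => (fiter c n z) ^ 2 + c n

/-- The Green's function, defined via limsup of `2^{-n} log |f^n_ω(z)|`. -/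
noncomputable def green (c : ℕ → ℂ) (z : ℂ) : ℝ :=
  Filter.limsup (fun n => (1 / 2 ^ n : ℝ) * Real.log (‖fiter c n z‖)) Filter.atTop

theorem stmt3 (R R₀ : ℝ) (hR : 0 < R)
    (c : ℕ → ℂ) (hc : ∀ n, ‖c n‖ < R)
    (hR₀ : 2 * R₀ ≤ R₀ ^ 2 - R) (hR₀R : 2 * R ≤ R₀)
    (z : ℂ) (hz : R₀ < ‖z‖) :
    ∃ L : ℝ, Filter.Tendsto (fun n => (1 / 2 ^ n : ℝ) * Real.log (‖fiter c n z‖))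
      Filter.atTop (nhds L) := by
  have hR₀2 : 2 < R₀ := by nlinarith
  have hgrow : ∀ n, 2 ^ n * R₀ ≤ ‖fiter c n z‖ := by
    intro n
    induction n with
    | zero => simpa [fiter] using hz.le
    | succ n ih =>
      have h2n : (1:ℝ) ≤ 2 ^ n := one_le_pow₀ (by norm_num)
      have h1 : R₀ ≤ ‖fiter c n z‖ := by nlinarith
      have hsub : ‖fiter c n z‖ ^ 2 - ‖c n‖
          ≤ ‖fiter c (n+1) z‖ := by
        have h := norm_sub_norm_le ((fiter c n z)^2) (-(c n))
        simpa [fiter, norm_pow, sub_neg_eq_add] using h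
      have hcR := (hc n).le
      have hkey : 2 * ‖fiter c n z‖ ≤ ‖fiter c n z‖^2 - R := by
        nlinarith
      calc 2^(n+1) * R₀ = 2 * (2^n * R₀) := by ring
        _ ≤ 2 * ‖fiter c n z‖ := by linarith
        _ ≤ ‖fiter c n z‖^2 - R := hkey
        _ ≤ _ := by linarith
  have hpos : ∀ n, R₀ ≤ ‖fiter c n z‖ := by
    intro n
    have h2n : (1:ℝ) ≤ 2 ^ n := one_le_pow₀ (by norm_num)
    nlinarith [hgrow n]
  set a : ℕ → ℝ := fun n => (1/2^n : ℝ) * Real.log (‖fiter c n z‖) with ha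
  have key : ∀ n, dist (a n) (a (n+1)) ≤ (1/2:ℝ)^(n+1) * Real.log 2 := by
    intro n
    set x := fiter c n z with hxdef
    have hx : R₀ ≤ ‖x‖ := hpos n
    have hx0 : x ≠ 0 := by
      intro h; rw [h] at hx; simp at hx; linarith
    set w : ℂ := c n / x^2 with hw
    have hfe : fiter c (n+1) z = x^2 * (1 + w) := by
      show x^2 + c n = _
      rw [hw, mul_add, mul_one, mul_div_cancel₀ (c n) (pow_ne_zero 2 hx0)]
    have hwle : ‖w‖ ≤ 1/2 := by
      rw [hw, norm_div, norm_pow]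
      rw [div_le_iff₀ (pow_pos (by linarith : (0:ℝ) < ‖x‖) 2)]
      nlinarith [(hc n).le, hx, hR₀2, hR₀R, hR]
    have h1w_lo : (1/2:ℝ) ≤ ‖1 + w‖ := by
      have h := norm_sub_norm_le (1:ℂ) (-w)
      simp only [norm_one, norm_neg, sub_neg_eq_add] at h
      linarith
    have h1w_hi : ‖1 + w‖ ≤ 2 := by
      have h := norm_add_le 1 w
      simp only [norm_one] at h
      linarith
    have hxa0 : ‖x‖ ≠ 0 := norm_ne_zero_iff.mpr hx0
    have h1w0 : ‖1 + w‖ ≠ 0 := by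
      have : (0:ℝ) < ‖1 + w‖ := by linarith
      exact this.ne'
    have hlog : Real.log (‖fiter c (n+1) z‖)
        = 2 * Real.log (‖x‖) + Real.log (‖1 + w‖) := by
      rw [hfe, norm_mul, norm_pow, Real.log_mul (pow_ne_zero _ hxa0) h1w0, Real.log_pow]
      push_cast; ring
    have hdiff : a (n+1) - a n = (1/2^(n+1):ℝ) * Real.log (‖1+w‖) := by
      simp only [ha]
      rw [hlog]
      field_simp
      ring
    have hlogabs : |Real.log (‖1+w‖)| ≤ Real.log 2 := by
      rw [abs_le]
      constructor
      · have h := Real.log_le_log (by norm_num : (0:ℝ) < 1/2) h1w_lo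
        have h2 : Real.log (1/2:ℝ) = - Real.log 2 := by rw [one_div, Real.log_inv]
        linarith
      · exact Real.log_le_log (by linarith) h1w_hi
    rw [dist_comm, Real.dist_eq, hdiff, abs_mul, abs_of_pos (by positivity : (0:ℝ) < 1/2^(n+1))]
    have : ((1:ℝ)/2)^(n+1) = 1/2^(n+1) := by rw [div_pow, one_pow]
    rw [this]
    exact mul_le_mul_of_nonneg_left hlogabs (by positivity)
  have hsum : Summable (fun n : ℕ => (1/2:ℝ)^(n+1) * Real.log 2) := by
    have h := (summable_geometric_two).mul_right ((1/2) * Real.log 2)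
    refine h.congr (fun n => ?_)
    ring
  exact cauchySeq_tendsto_of_complete (cauchySeq_of_dist_le_of_summable _ key hsum)
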